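/- Let R be a unital non-associative ring, I a set well-ordered by ≪, Δ = {δ_i}_{i∈I} a commutative family of additive maps δ_i : R → R with δ_i(1) = 0, and S = R[ℕ^(I); π] the associated differential monoid ring. Then for every r ∈ R and every f ∈ ℕ^(I), the following identity holds in S: (r x^0)·(1 x^f) = Σ_{g ≤ f} (−1)^{|g|} C(f,g) (1 x^{f−g})·(δ^g(r) x^0), where |g| = Σ_{i∈I} g(i). -/

import Mathlib

open scoped Classical

/-! Framework for the differential monoid ring `S = R[ℕ^(I); π]` associated with a
family `Δ = {δ_i}_{i ∈ I}` of additive maps `δ_i : R → R` with `δ_i(1) = 0`, where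
`I` is well-ordered by `≪` (encoded as a `LinearOrder` with well-founded `<`).
Here `ℕ^(I)` is the additive monoid `I →₀ ℕ` of finitely supported functions, the
ring `S` is `(I →₀ ℕ) →₀ R` (with `Finsupp.single f r` representing `r x^f`), and
`π^f_g(r) = C(f,g)·δ^{f-g}(r)` for `g ≤ f` and `π^f_g = 0` otherwise. -/

/-- A two-sided ideal with respect to a (possibly non-associative, non-unital)
multiplication `m` on an additive group `A`. -/
structure IsIdealWith {A : Type*} [AddCommGroup A] (m : A → A → A) (J : Set A) : Prop where
  zero_mem : (0 : A) ∈ J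
  add_mem : ∀ {x y : A}, x ∈ J → y ∈ J → x + y ∈ J
  neg_mem : ∀ {x : A}, x ∈ J → -x ∈ J
  mul_mem_left : ∀ (r : A) {x : A}, x ∈ J → m r x ∈ J
  mul_mem_right : ∀ {x : A} (r : A), x ∈ J → m x r ∈ J

/-- The subset `F` of `A` is a field with respect to the multiplication `m` with
identity `one`. -/
def IsFieldWith {A : Type*} [AddCommGroup A] (m : A → A → A) (one : A) (F : Set A) : Prop :=
  one ∈ F ∧ (∀ x ∈ F, ∀ y ∈ F, x + y ∈ F) ∧ (∀ x ∈ F, -x ∈ F) ∧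
  (∀ x ∈ F, ∀ y ∈ F, m x y ∈ F) ∧ (∀ x ∈ F, ∀ y ∈ F, m x y = m y x) ∧
  (∀ x ∈ F, x ≠ 0 → ∃ y ∈ F, m x y = one ∧ m y x = one)

/-- `A` is simple w.r.t. the multiplication `m`: `{0}` and `A` are its only
two-sided ideals. -/
def SimpleWith {A : Type*} [AddCommGroup A] (m : A → A → A) : Prop :=
  ∀ J : Set A, IsIdealWith m J → J = {0} ∨ J = Set.univ

/-- The center of `A` w.r.t. the multiplication `m`: elements commuting with all
elements whose associator with any two elements (in any position) vanishes. -/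
def centerWith {A : Type*} [AddCommGroup A] (m : A → A → A) : Set A :=
  {u | (∀ v, m u v = m v u) ∧ (∀ v w, m (m u v) w = m u (m v w)) ∧
       (∀ v w, m (m v u) w = m v (m u w)) ∧ (∀ v w, m (m v w) u = m v (m w u))}

variable {R : Type*} [NonAssocRing R] {I : Type*} [LinearOrder I]

/-- `δ^f = δ_{i₁}^{f(i₁)} ∘ ⋯ ∘ δ_{iₘ}^{f(iₘ)}` where `i₁ ≪ ⋯ ≪ iₘ` is the support
of `f` listed in increasing order. -/
def deltaPow (δ : I → R → R) (f : I →₀ ℕ) : R → R :=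
  ((f.support.sort (· ≤ ·)).map fun i => (δ i)^[f i]).foldr (· ∘ ·) id

/-- `C(f,g) = ∏ᵢ binomial (f i) (g i)` (equal to `0` whenever `g ≰ f`). -/
def binomF (f g : I →₀ ℕ) : ℕ :=
  ∏ i ∈ f.support ∪ g.support, Nat.choose (f i) (g i)

/-- `π^f_g(r) = C(f,g)·δ^{f-g}(r)` for `g ≤ f`, and `π^f_g = 0` otherwise. -/
noncomputable def piN (δ : I → R → R) (f g : I →₀ ℕ) (r : R) : R :=
  if g ≤ f then (binomF f g) • deltaPow δ (f - g) r else 0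

/-- `R_Δ = ⋂ᵢ ker δᵢ`. -/
def RDelta (δ : I → R → R) : Set R := {r | ∀ i : I, δ i r = 0}

/-- `Δ` is a set of left kernel derivations: each `δᵢ` is left `R_Δ`-linear. -/
def LeftKernel (δ : I → R → R) : Prop :=
  ∀ i : I, ∀ s ∈ RDelta δ, ∀ r : R, δ i (s * r) = s * δ i r

/-- `Δ` is a set of right kernel derivations: each `δᵢ` is right `R_Δ`-linear. -/
def RightKernel (δ : I → R → R) : Prop :=
  ∀ i : I, ∀ r : R, ∀ s ∈ RDelta δ, δ i (r * s) = δ i r * s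

/-- `R` is `Δ`-simple: `{0}` and `R` are its only `Δ`-invariant ideals. -/
def DeltaSimple (δ : I → R → R) : Prop :=
  ∀ J : Set R, IsIdealWith (· * ·) J → (∀ i : I, ∀ r ∈ J, δ i r ∈ J) →
    J = {0} ∨ J = Set.univ

/-- The multiplication of the differential monoid ring `S = R[ℕ^(I); π]` on
`(I →₀ ℕ) →₀ R`: the biadditive extension of
`(r x^f)(s x^g) = Σ_h r π^f_h(s) x^{h+g}`. -/
noncomputable def mulN (δ : I → R → R) (u v : (I →₀ ℕ) →₀ R) : (I →₀ ℕ) →₀ R :=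
  u.sum fun f r => v.sum fun g s =>
    ∑ h ∈ Finset.Iic f, Finsupp.single (h + g) (r * piN δ f h s)

/-! The left side is `r x^f`. On the right, commutativity of `Δ` gives
`δ^{f-g-h} ∘ δ^g = δ^{f-h}`, so after exchanging the sums over `g` and `h` the coefficient of
`x^h` is `c_h • δ^{f-h}(r)` with `c_h = Σ_{g ≤ f-h} (-1)^{|g|} C(f,g) C(f-g,h)`. This sum factors
over the coordinates into one-variable sums `Σ_n (-1)^n C(a,n) C(a-n,b) = C(a,b) Σ_n (-1)^n C(a-b,n)`,
which vanish unless `a = b`; hence `c_h = [h = f]`. -/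

open Finset

theorem le_and_le_tsub_iff_add_le {α : Type*} [AddCommMonoid α] [PartialOrder α]
    [CanonicallyOrderedAdd α] [Sub α] [OrderedSub α] [AddLeftReflectLE α] {a b c : α} :
    a ≤ c ∧ b ≤ c - a ↔ a + b ≤ c :=
  ⟨fun h => (le_tsub_iff_left h.1).1 h.2,
    fun h => ⟨le_of_add_le_left h, (le_tsub_iff_left (le_of_add_le_left h)).2 h⟩⟩

theorem Finsupp.sum_Iic_prod_eq_prod_sum {ι M : Type*} [DecidableEq ι] [CommSemiring M]
    (k : ι →₀ ℕ) {s : Finset ι} (hs : k.support ⊆ s) (φ : ι → ℕ → M) :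
    ∑ g ∈ Iic k, ∏ i ∈ s, φ i (g i) = ∏ i ∈ s, ∑ n ∈ Iic (k i), φ i n := by
  have hIic : Iic k = s.finsupp fun i => Iic (k i) := by
    ext g
    simp only [mem_Iic, mem_finsupp_iff, Finsupp.le_def]
    refine ⟨fun hg => ⟨fun i hi => hs ?_, fun i _ => hg i⟩, fun hg i => ?_⟩
    · exact Finsupp.mem_support_iff.2 fun hk => Finsupp.mem_support_iff.1 hi
        (Nat.eq_zero_of_le_zero (hk ▸ hg i))
    · by_cases hi : i ∈ s
      · exact hg.2 i hi
      · simp [Finsupp.notMem_support_iff.1 fun h => hi (hg.1 h)]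
  rw [hIic, prod_sum, Finset.finsupp, sum_map]
  refine Finset.sum_congr (by congr!) fun x _ => ?_
  rw [← prod_attach s]
  exact Finset.prod_congr rfl fun i _ => by simp [Finsupp.indicator_of_mem i.2]

theorem Nat.choose_mul_choose_sub_comm (a b n : ℕ) :
    a.choose n * (a - n).choose b = a.choose b * (a - b).choose n := by
  have hn := Nat.choose_mul (n := a) (Nat.le_add_right n b)
  have hb := Nat.choose_mul (n := a) (Nat.le_add_left b n)
  rw [Nat.add_sub_cancel_left] at hn
  rw [Nat.add_sub_cancel] at hb
  rw [← hn, ← hb, Nat.choose_symm_add]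

theorem Int.alternating_sum_choose_mul_choose_sub {a b : ℕ} (hb : b ≤ a) :
    ∑ n ∈ Iic (a - b), ((-1) ^ n * a.choose n * (a - n).choose b : ℤ) =
      if a = b then 1 else 0 := by
  calc ∑ n ∈ Iic (a - b), ((-1) ^ n * a.choose n * (a - n).choose b : ℤ)
      = a.choose b * ∑ n ∈ Finset.range (a - b + 1), ((-1) ^ n * (a - b).choose n : ℤ) := by
        rw [← Nat.range_succ_eq_Iic, mul_sum]
        refine Finset.sum_congr rfl fun n _ => ?_
        rw [mul_assoc, ← Nat.cast_mul, Nat.choose_mul_choose_sub_comm]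
        push_cast
        ring
    _ = if a = b then 1 else 0 := by
        rw [Int.alternating_sum_range_choose]
        by_cases hab : a = b
        · simp [hab]
        · rw [if_neg (by omega), if_neg hab, mul_zero]

theorem Finset.noncommProd_eq_of_subset {α β : Type*} [Monoid β] {s t : Finset α} (h : s ⊆ t)
    (f : α → β) (comm : (t : Set α).Pairwise (Function.onFun Commute f))
    (hf : ∀ i ∈ t, i ∉ s → f i = 1) :
    s.noncommProd f (comm.mono (coe_subset.2 h)) = t.noncommProd f comm := by
  classical
  have hsdiff : (t \ s).noncommProd f (comm.mono (coe_subset.2 sdiff_subset)) = 1 := by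
    rw [noncommProd_eq_pow_card _ _ _ 1 fun i hi => hf i (mem_sdiff.1 hi).1 (mem_sdiff.1 hi).2,
      one_pow]
  calc s.noncommProd f _
      = s.noncommProd f _ * (t \ s).noncommProd f _ := by rw [hsdiff, mul_one]
    _ = (s ∪ t \ s).noncommProd f (by rwa [union_sdiff_of_subset h]) :=
        (noncommProd_union_of_disjoint disjoint_sdiff f _).symm
    _ = t.noncommProd f comm := noncommProd_congr (union_sdiff_of_subset h) (fun _ _ => rfl) _

section DeltaPow

variable {R I : Type*} {δ : I → R → R}

def deltaEnd (δ : I → R → R) (i : I) : Function.End R := δ i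

theorem commute_deltaEnd (hcomm : ∀ i j : I, δ i ∘ δ j = δ j ∘ δ i) (i j : I) :
    Commute (deltaEnd δ i) (deltaEnd δ j) :=
  hcomm i j

theorem pairwise_commute_deltaEnd_pow (hcomm : ∀ i j : I, δ i ∘ δ j = δ j ∘ δ i) (f : I → ℕ)
    (s : Set I) : s.Pairwise (Function.onFun Commute fun i => deltaEnd δ i ^ f i) :=
  fun i _ j _ _ => (commute_deltaEnd hcomm i j).pow_pow _ _

theorem deltaPow_apply_eq_noncommProd [LinearOrder I] (hcomm : ∀ i j : I, δ i ∘ δ j = δ j ∘ δ i)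
    (f : I →₀ ℕ) {s : Finset I} (hs : f.support ⊆ s) (r : R) :
    deltaPow δ f r =
      s.noncommProd (fun i => deltaEnd δ i ^ f i) (pairwise_commute_deltaEnd_pow hcomm f _) r := by
  have hsort : ((f.support.sort (· ≤ ·)).map fun i => deltaEnd δ i ^ f i).prod =
      f.support.noncommProd (fun i => deltaEnd δ i ^ f i)
        (pairwise_commute_deltaEnd_pow hcomm f _) := by
    rw [← noncommProd_toFinset _ _ (pairwise_commute_deltaEnd_pow hcomm f _)
      (f.support.sort_nodup _)]
    exact noncommProd_congr (sort_toFinset _ _) (fun _ _ => rfl) _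
  rw [← noncommProd_eq_of_subset hs _ _ fun i _ hi => by
    rw [Finsupp.notMem_support_iff.1 hi, pow_zero], ← hsort]
  -- `List.prod` is a right fold and `Function.End R` multiplies by composition.
  rfl

theorem deltaPow_add_apply [LinearOrder I] (hcomm : ∀ i j : I, δ i ∘ δ j = δ j ∘ δ i)
    (a b : I →₀ ℕ) (r : R) :
    deltaPow δ (a + b) r = deltaPow δ a (deltaPow δ b r) := by
  classical
  have ha : a.support ⊆ a.support ∪ b.support := subset_union_left
  have hb : b.support ⊆ a.support ∪ b.support := subset_union_right
  have hmul := (noncommProd_congr rfl (fun i _ => pow_add (deltaEnd δ i) (a i) (b i))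
      (pairwise_commute_deltaEnd_pow hcomm (a + b) ↑(a.support ∪ b.support))).trans
    (noncommProd_mul_distrib _ _ (pairwise_commute_deltaEnd_pow hcomm a _)
      (pairwise_commute_deltaEnd_pow hcomm b _) fun i _ j _ _ =>
      (commute_deltaEnd hcomm i j).pow_pow _ _)
  rw [deltaPow_apply_eq_noncommProd hcomm _ (Finsupp.support_add.trans (union_subset ha hb)),
    deltaPow_apply_eq_noncommProd hcomm _ ha, deltaPow_apply_eq_noncommProd hcomm _ hb]
  exact congrFun hmul r

theorem deltaPow_zero [LinearOrder I] : deltaPow δ 0 = id := by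
  simp [deltaPow]

theorem deltaPow_apply_zero [LinearOrder I] [Zero R] (h0 : ∀ i, δ i 0 = 0) (f : I →₀ ℕ) :
    deltaPow δ f 0 = 0 := by
  unfold deltaPow
  induction f.support.sort (· ≤ ·) with
  | nil => rfl
  | cons i l ih => simp [ih, Function.iterate_fixed (h0 i)]

end DeltaPow

section BinomF

variable {I : Type*} [LinearOrder I]

theorem binomF_eq_prod (f g : I →₀ ℕ) {s : Finset I} (hf : f.support ⊆ s)
    (hg : g.support ⊆ s) : binomF f g = ∏ i ∈ s, (f i).choose (g i) := by
  refine prod_subset (union_subset hf hg) fun i _ hi => ?_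
  rw [Finsupp.notMem_support_iff.1 fun h => hi (mem_union_left _ h),
    Finsupp.notMem_support_iff.1 fun h => hi (mem_union_right _ h), Nat.choose_self]

theorem binomF_self (f : I →₀ ℕ) : binomF f f = 1 :=
  prod_eq_one fun _ _ => Nat.choose_self _

theorem sum_Iic_neg_one_pow_mul_binomF_mul_binomF {f h : I →₀ ℕ} (hh : h ≤ f) :
    ∑ g ∈ Iic (f - h), ((-1) ^ (g.sum fun _ n => n) * binomF f g * binomF (f - g) h : ℤ) =
      if h = f then 1 else 0 := by
  have hterm : ∀ g ∈ Iic (f - h),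
      ((-1) ^ (g.sum fun _ n => n) * binomF f g * binomF (f - g) h : ℤ) =
        ∏ i ∈ f.support, ((-1) ^ g i * (f i).choose (g i) * (f i - g i).choose (h i) : ℤ) := by
    intro g hg
    have hgs : g.support ⊆ f.support :=
      Finsupp.support_mono ((mem_Iic.1 hg).trans tsub_le_self)
    rw [Finsupp.sum_of_support_subset g hgs _ fun _ _ => rfl, ← prod_pow_eq_pow_sum,
      binomF_eq_prod f g subset_rfl hgs,
      binomF_eq_prod (f - g) h Finsupp.support_tsub (Finsupp.support_mono hh)]
    push_cast
    rw [← prod_mul_distrib, ← prod_mul_distrib]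
    rfl
  rw [sum_congr rfl hterm, Finsupp.sum_Iic_prod_eq_prod_sum (f - h) Finsupp.support_tsub
    fun i n => ((-1) ^ n * (f i).choose n * (f i - n).choose (h i) : ℤ)]
  simp only [Finsupp.tsub_apply]
  rw [prod_congr rfl fun i _ => Int.alternating_sum_choose_mul_choose_sub (hh i), prod_boole]
  congr 1
  refine propext ⟨fun hfh => Finsupp.ext fun i => ?_, fun hfh i _ => by rw [hfh]⟩
  by_cases hi : i ∈ f.support
  · exact (hfh i hi).symm
  · rw [Finsupp.notMem_support_iff.1 hi]
    exact Nat.eq_zero_of_le_zero (Finsupp.notMem_support_iff.1 hi ▸ hh i)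

end BinomF

section MulN

variable {R I : Type*} [NonAssocRing R] [LinearOrder I] {δ : I → R → R}

theorem piN_apply_zero (h0 : ∀ i, δ i 0 = 0) (f g : I →₀ ℕ) : piN δ f g 0 = 0 := by
  simp [piN, deltaPow_apply_zero h0]

theorem piN_self (f : I →₀ ℕ) (r : R) : piN δ f f r = r := by
  simp [piN, binomF_self, deltaPow_zero]

theorem piN_deltaPow_apply (hcomm : ∀ i j : I, δ i ∘ δ j = δ j ∘ δ i) {f g h : I →₀ ℕ}
    (hg : g ≤ f) (hh : h ≤ f - g) (r : R) :
    piN δ (f - g) h (deltaPow δ g r) = binomF (f - g) h • deltaPow δ (f - h) r := by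
  have hgh : g ≤ f - h := (le_and_le_tsub_iff_add_le.2 <| by
    rw [add_comm]
    exact le_and_le_tsub_iff_add_le.1 ⟨hg, hh⟩).2
  rw [piN, if_pos hh, ← deltaPow_add_apply hcomm, tsub_right_comm, tsub_add_cancel_of_le hgh]

theorem mulN_single_single (h0 : ∀ i, δ i 0 = 0) (a b : I →₀ ℕ) (r s : R) :
    mulN δ (Finsupp.single a r) (Finsupp.single b s) =
      ∑ h ∈ Iic a, Finsupp.single (h + b) (r * piN δ a h s) := by
  rw [mulN, Finsupp.sum_single_index, Finsupp.sum_single_index]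
  · simp [piN_apply_zero h0]
  · simp

theorem mulN_single_zero_single (h0 : ∀ i, δ i 0 = 0) (f : I →₀ ℕ) (r s : R) :
    mulN δ (Finsupp.single 0 r) (Finsupp.single f s) = Finsupp.single f (r * s) := by
  rw [mulN_single_single h0, show Iic (0 : I →₀ ℕ) = {0} from Iic_bot, sum_singleton, zero_add,
    piN_self]

theorem mulN_single_one_single_deltaPow (h0 : ∀ i, δ i 0 = 0)
    (hcomm : ∀ i j : I, δ i ∘ δ j = δ j ∘ δ i) {f g : I →₀ ℕ} (hg : g ≤ f) (r : R) :
    mulN δ (Finsupp.single (f - g) 1) (Finsupp.single 0 (deltaPow δ g r)) =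
      ∑ h ∈ Iic (f - g), Finsupp.single h (binomF (f - g) h • deltaPow δ (f - h) r) := by
  rw [mulN_single_single h0]
  refine Finset.sum_congr rfl fun h hh => ?_
  rw [add_zero, one_mul, piN_deltaPow_apply hcomm hg (mem_Iic.1 hh)]

end MulN

theorem stmt16_general {R : Type*} [NonAssocRing R] {I : Type*} [LinearOrder I]
    (δ : I → R → R)
    (hadd : ∀ (i : I) (r s : R), δ i (r + s) = δ i r + δ i s)
    (hcomm : ∀ i j : I, δ i ∘ δ j = δ j ∘ δ i)
    (r : R) (f : I →₀ ℕ) :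
    mulN δ (Finsupp.single 0 r) (Finsupp.single f (1 : R)) =
      ∑ g ∈ Finset.Iic f,
        ((-1 : ℤ) ^ (g.sum fun _ n => n) * (binomF f g : ℤ)) •
          mulN δ (Finsupp.single (f - g) (1 : R))
            (Finsupp.single 0 (deltaPow δ g r)) := by
  have h0 : ∀ i, δ i 0 = 0 := fun i => (AddMonoidHom.mk' (δ i) (hadd i)).map_zero
  have hterm : ∀ g ∈ Iic f,
      ((-1 : ℤ) ^ (g.sum fun _ n => n) * (binomF f g : ℤ)) •
          mulN δ (Finsupp.single (f - g) 1) (Finsupp.single 0 (deltaPow δ g r)) =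
        ∑ h ∈ Iic (f - g), Finsupp.single h
          (((-1) ^ (g.sum fun _ n => n) * binomF f g * binomF (f - g) h : ℤ) •
            deltaPow δ (f - h) r) := by
    intro g hg
    rw [mulN_single_one_single_deltaPow h0 hcomm (mem_Iic.1 hg), smul_sum]
    exact sum_congr rfl fun h _ => by rw [Finsupp.smul_single, ← natCast_zsmul, smul_smul]
  have hswap : ∀ g h : I →₀ ℕ, g ∈ Iic f ∧ h ∈ Iic (f - g) ↔ g ∈ Iic (f - h) ∧ h ∈ Iic f := by
    intro g h
    simp only [mem_Iic]
    rw [le_and_le_tsub_iff_add_le, and_comm, le_and_le_tsub_iff_add_le, add_comm]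
  rw [mulN_single_zero_single h0, mul_one, sum_congr rfl hterm, sum_comm' hswap]
  calc Finsupp.single f r
      = ∑ h ∈ Iic f, Finsupp.single h ((if h = f then 1 else 0 : ℤ) • deltaPow δ (f - h) r) := by
        rw [sum_eq_single_of_mem f (mem_Iic.2 le_rfl) fun h _ hf => by simp [hf], if_pos rfl,
          one_smul, tsub_self, deltaPow_zero, id]
    _ = _ := sum_congr rfl fun h hh => by
        rw [← sum_Iic_neg_one_pow_mul_binomF_mul_binomF (mem_Iic.1 hh), sum_smul,
          Finsupp.single_finsetSum]

/-- For a commutative family `Δ` of additive maps with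
`δᵢ(1) = 0`, in `S = R[ℕ^(I); π]` the identity
`(r x^0)(1 x^f) = Σ_{g ≤ f} (−1)^{|g|} C(f,g) (1 x^{f−g})·(δ^g(r) x^0)` holds. -/
theorem stmt16 {R : Type*} [NonAssocRing R] {I : Type*} [LinearOrder I]
    [WellFoundedLT I] (δ : I → R → R)
    (hadd : ∀ (i : I) (r s : R), δ i (r + s) = δ i r + δ i s)
    (h1 : ∀ i : I, δ i 1 = 0)
    (hcomm : ∀ i j : I, δ i ∘ δ j = δ j ∘ δ i)
    (r : R) (f : I →₀ ℕ) :
    mulN δ (Finsupp.single 0 r) (Finsupp.single f (1 : R)) =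
      ∑ g ∈ Finset.Iic f,
        ((-1 : ℤ) ^ (g.sum fun _ n => n) * (binomF f g : ℤ)) •
          mulN δ (Finsupp.single (f - g) (1 : R))
            (Finsupp.single 0 (deltaPow δ g r)) :=
  stmt16_general δ hadd hcomm r f
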